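/- In a restricted Lie algebra (L, [p]) over a field of characteristic p > 0, if x is semisimple, then every element y of the p-subalgebra generated by x is semisimple. -/

import Mathlib

open scoped TensorProduct

/-- Iterated adjoint action: `adIter z n w = (ad z)^n w`. -/
def adIter {L : Type*} [LieRing L] (z : L) : ℕ → L → L
  | 0, w => w
  | n+1, w => ⁅z, adIter z n w⁆

/-- A `p`-semilinear map between `F`-vector spaces. -/
def IsPSemilinear (p : ℕ) (F : Type*) [Field F] {V W : Type*}
    [AddCommGroup V] [Module F V] [AddCommGroup W] [Module F W] (f : V → W) : Prop :=
  ∀ (a : F) (x y : V), f (a • x + y) = a ^ p • f x + f y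

/-- `pm` is a `p`-mapping on the Lie algebra `L` over `F`. -/
structure IsPMap (p : ℕ) (F : Type*) [Field F] (L : Type*) [LieRing L] [LieAlgebra F L]
    (pm : L → L) : Prop where
  ad_pow : ∀ a x : L, ⁅pm a, x⁆ = adIter a p x
  smul_pow : ∀ (c : F) (a : L), pm (c • a) = c ^ p • pm a
  add_pow : ∀ a b : L, ∃ s : Fin (p - 1) → L,
    adIter ((Polynomial.X : Polynomial F) ⊗ₜ[F] a + (1 : Polynomial F) ⊗ₜ[F] b) (p - 1)
        ((1 : Polynomial F) ⊗ₜ[F] a)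
      = (∑ j : Fin (p - 1), ((j : ℕ) + 1) •
          (((Polynomial.X : Polynomial F) ^ (j : ℕ)) ⊗ₜ[F] s j)) ∧
    pm (a + b) = pm a + pm b + ∑ j : Fin (p - 1), s j

/-- `H` is a `p`-subalgebra w.r.t. the map `pm`. -/
def IsPSubalgebra (F : Type*) [Field F] {L : Type*} [LieRing L] [LieAlgebra F L]
    (pm : L → L) (H : LieSubalgebra F L) : Prop :=
  ∀ x ∈ H, pm x ∈ H

/-- The `p`-subalgebra generated by a set `S`. -/
def pSpan (F : Type*) [Field F] {L : Type*} [LieRing L] [LieAlgebra F L]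
    (pm : L → L) (S : Set L) : LieSubalgebra F L :=
  sInf {H : LieSubalgebra F L | IsPSubalgebra F pm H ∧ S ⊆ H}

/-- An element `x` is semisimple if it lies in the `p`-subalgebra generated by `pm x`. -/
def IsSemisimpleElt (F : Type*) [Field F] {L : Type*} [LieRing L] [LieAlgebra F L]
    (pm : L → L) (x : L) : Prop :=
  x ∈ pSpan F pm {pm x}

/-- An element is `p`-nilpotent if some iterate of the `p`-map kills it. -/
def IsPNilpotentElt {L : Type*} (pm : L → L) [Zero L] (x : L) : Prop :=
  ∃ n : ℕ, pm^[n] x = 0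


/-!
The iterates `x^{[p]^i}` commute, so their span `A` is an abelian `p`-subalgebra, equal to
`(Fx)_p`, on which Jacobson's formula makes the `p`-map additive, i.e. Frobenius-semilinear.
Semisimplicity of `x` says exactly that `x` lies in the span of its higher iterates; this makes
`A` finite-dimensional and the `p`-map `φ` on `A` have spanning image. For such a semilinear
endomorphism a rank count (`dim span φ(C) ≤ dim C` on a complement `C`) gives
`span φ(B) = B` for every `φ`-stable subspace `B`. Taking `B = (Fy)_p` for `y ∈ A` puts `y` in
the span of its own higher iterates, which is `(F y^{[p]})_p`.
-/

open Submodule Set Module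

section LinearAlgebra

variable {K V W : Type*} [Field K] [AddCommGroup V] [Module K V] [AddCommGroup W] [Module K W]

theorem finrank_span_image_le {σ : K →+* K} (φ : V →ₛₗ[σ] W) (U : Submodule K V)
    [FiniteDimensional K U] : finrank K (span K (φ '' U)) ≤ finrank K U := by
  let b := finBasis K U
  have himage : φ '' U ⊆ span K (range fun i => φ (b i)) := by
    rintro _ ⟨u, hu, rfl⟩
    have hsum : u = ∑ i, b.repr ⟨u, hu⟩ i • (b i : V) := by
      simpa only [coe_sum, coe_smul] using congrArg Subtype.val (b.sum_repr ⟨u, hu⟩).symm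
    rw [hsum, map_sum]
    exact sum_mem fun i _ => by rw [map_smulₛₗ]; exact smul_mem _ _ (subset_span ⟨i, rfl⟩)
  have : FiniteDimensional K (span K (range fun i => φ (b i))) :=
    FiniteDimensional.span_of_finite K (finite_range _)
  calc finrank K (span K (φ '' U)) ≤ finrank K (span K (range fun i => φ (b i))) :=
        Submodule.finrank_mono (span_le.2 himage)
    _ ≤ Fintype.card (Fin (finrank K U)) := finrank_range_le_card _
    _ = finrank K U := Fintype.card_fin _

theorem span_image_eq_of_span_range_eq_top [FiniteDimensional K V] {σ : K →+* K}
    (φ : V →ₛₗ[σ] V) (hφ : span K (range φ) = ⊤) {B : Submodule K V}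
    (hB : ∀ v ∈ B, φ v ∈ B) : span K (φ '' B) = B := by
  obtain ⟨C, hBC⟩ := B.exists_isCompl
  have htop : ⊤ ≤ span K (φ '' B) ⊔ span K (φ '' C) := by
    rw [← hφ, span_le]
    rintro _ ⟨v, rfl⟩
    obtain ⟨b, hb, c, hc, rfl⟩ := mem_sup.1 (hBC.sup_eq_top ▸ mem_top : v ∈ B ⊔ C)
    rw [map_add]
    exact add_mem_sup (subset_span (mem_image_of_mem φ hb)) (subset_span (mem_image_of_mem φ hc))
  refine eq_of_le_of_finrank_le (span_le.2 (image_subset_iff.2 hB)) ?_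
  have hV := Submodule.finrank_mono htop
  have hsup := finrank_add_le_finrank_add_finrank (span K (φ '' B)) (span K (φ '' C))
  have hC := finrank_span_image_le φ C
  have hBC := finrank_add_eq_of_isCompl hBC
  rw [finrank_top] at hV
  omega

theorem exists_mem_span_image_Iio_of_mem_span_image_Iio (v : ℕ → V) :
    ∀ n, v 0 ∈ span K ((fun i => v (i + 1)) '' Iio n) → ∃ m, v m ∈ span K (v '' Iio m)
  | 0, h => ⟨0, by simpa using h⟩
  | n + 1, h => by
    by_cases hn : v 0 ∈ span K ((fun i => v (i + 1)) '' Iio n)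
    · exact exists_mem_span_image_Iio_of_mem_span_image_Iio v n hn
    refine ⟨n + 1, span_mono ?_ (mem_span_insert_exchange (span_mono ?_ h) hn)⟩
    · rintro _ (rfl | ⟨i, hi, rfl⟩)
      exacts [mem_image_of_mem v n.succ_pos, mem_image_of_mem v (Nat.succ_lt_succ hi)]
    · rintro _ ⟨i, hi, rfl⟩
      rcases (Nat.lt_succ_iff.1 hi).lt_or_eq with hlt | rfl
      exacts [mem_insert_of_mem _ (mem_image_of_mem _ hlt), mem_insert _ _]

theorem exists_mem_span_image_Iio (v : ℕ → V) (h : v 0 ∈ span K (range fun i => v (i + 1))) :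
    ∃ m, v m ∈ span K (v '' Iio m) := by
  rw [← image_univ, ← iUnion_Iio, image_iUnion, span_iUnion] at h
  obtain ⟨n, hn⟩ := (mem_iSup_of_directed _ (Monotone.directed_le fun _ _ hmn =>
    span_mono (image_mono (Iio_subset_Iio hmn)))).1 h
  exact exists_mem_span_image_Iio_of_mem_span_image_Iio v n hn

end LinearAlgebra

open scoped Polynomial

theorem adIter_eq_zero_of_lie_eq_zero {L : Type*} [LieRing L] {z w : L} (h : ⁅z, w⁆ = 0) :
    ∀ {n : ℕ}, n ≠ 0 → adIter z n w = 0
  | 1, _ => h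
  | n + 2, _ => by rw [adIter, adIter_eq_zero_of_lie_eq_zero h n.succ_ne_zero, lie_zero]

theorem eq_zero_of_sum_X_pow_tmul_eq_zero {R M : Type*} [CommRing R] [AddCommGroup M] [Module R M]
    {n : ℕ} (s : Fin n → M) (h : ∑ j : Fin n, ((Polynomial.X : R[X]) ^ (j : ℕ)) ⊗ₜ[R] s j = 0)
    (k : Fin n) : s k = 0 := by
  have hk := congrArg ((TensorProduct.lid R M).toLinearMap ∘ₗ
    TensorProduct.map (Polynomial.lcoeff R (k : ℕ)) LinearMap.id) h
  simpa [Polynomial.coeff_X_pow, Fin.val_inj] using hk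

theorem lie_eq_zero_of_mem_span {F L : Type*} [Field F] [LieRing L] [LieAlgebra F L] {S : Set L}
    (hS : ∀ a ∈ S, ∀ b ∈ S, ⁅a, b⁆ = 0) {a b : L} (ha : a ∈ span F S) (hb : b ∈ span F S) :
    ⁅a, b⁆ = 0 := by
  induction ha, hb using Submodule.span_induction₂ with
  | mem_mem u v hu hv => exact hS u hu v hv
  | zero_left v _ => exact zero_lie v
  | zero_right u _ => exact lie_zero u
  | add_left u v w _ _ _ h₁ h₂ => rw [add_lie, h₁, h₂, add_zero]
  | add_right u v w _ _ _ h₁ h₂ => rw [lie_add, h₁, h₂, add_zero]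
  | smul_left c u v _ _ h => rw [smul_lie, h, smul_zero]
  | smul_right c u v _ _ h => rw [lie_smul, h, smul_zero]

def pIterSpan (F : Type*) [Field F] {L : Type*} [AddCommGroup L] [Module F L] (pm : L → L)
    (x : L) : Submodule F L :=
  span F (range fun i : ℕ => pm^[i] x)

section pIterSpan

variable {F : Type*} [Field F] {L : Type*} [AddCommGroup L] [Module F L] {pm : L → L}

theorem iterate_mem_pIterSpan (x : L) (i : ℕ) : pm^[i] x ∈ pIterSpan F pm x :=
  subset_span ⟨i, rfl⟩

theorem pIterSpan_apply_le (x : L) : pIterSpan F pm (pm x) ≤ pIterSpan F pm x :=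
  span_le.2 <| range_subset_iff.2 fun i => iterate_mem_pIterSpan x (i + 1)

theorem pIterSpan_apply_eq_of_mem {x : L} (hx : x ∈ pIterSpan F pm (pm x)) :
    pIterSpan F pm (pm x) = pIterSpan F pm x := by
  refine le_antisymm (pIterSpan_apply_le x) (span_le.2 <| range_subset_iff.2 ?_)
  rintro (_ | i)
  exacts [hx, iterate_mem_pIterSpan (pm x) i]

end pIterSpan

section pSpan

variable {F : Type*} [Field F] {L : Type*} [LieRing L] [LieAlgebra F L] {pm : L → L} {S : Set L}

theorem mem_pSpan_iff {a : L} :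
    a ∈ pSpan F pm S ↔ ∀ H : LieSubalgebra F L, IsPSubalgebra F pm H → S ⊆ H → a ∈ H := by
  rw [pSpan, ← SetLike.mem_coe, LieSubalgebra.coe_sInf]
  simp

theorem subset_pSpan : S ⊆ pSpan F pm S :=
  fun _ ha => mem_pSpan_iff.2 fun _ _ hS => hS ha

theorem isPSubalgebra_pSpan : IsPSubalgebra F pm (pSpan F pm S) :=
  fun _ ha => mem_pSpan_iff.2 fun H hH hS => hH _ (mem_pSpan_iff.1 ha H hH hS)

theorem pSpan_le {H : LieSubalgebra F L} (hH : IsPSubalgebra F pm H) (hS : S ⊆ H) :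
    pSpan F pm S ≤ H :=
  sInf_le ⟨hH, hS⟩

end pSpan

namespace IsPMap

variable {p : ℕ} [Fact p.Prime] {F : Type*} [Field F] {L : Type*} [LieRing L] [LieAlgebra F L]
  {pm : L → L}

theorem map_zero (hpm : IsPMap p F L pm) : pm 0 = 0 := by
  simpa [zero_pow (Fact.out : p.Prime).ne_zero] using hpm.smul_pow 0 0

theorem lie_apply_eq_zero (hpm : IsPMap p F L pm) {a b : L} (h : ⁅a, b⁆ = 0) :
    ⁅pm a, b⁆ = 0 := by
  rw [hpm.ad_pow]
  exact adIter_eq_zero_of_lie_eq_zero h (Fact.out : p.Prime).ne_zero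

theorem lie_iterate_eq_zero (hpm : IsPMap p F L pm) {a b : L} (h : ⁅a, b⁆ = 0) (i j : ℕ) :
    ⁅pm^[i] a, pm^[j] b⁆ = 0 := by
  have left : ∀ (i : ℕ) {a b : L}, ⁅a, b⁆ = 0 → ⁅pm^[i] a, b⁆ = 0 := by
    intro i
    induction i with
    | zero => exact id
    | succ i ih =>
      intro a b h
      rw [Function.iterate_succ_apply']; exact hpm.lie_apply_eq_zero (ih h)
  rw [← lie_skew, left j (by rw [← lie_skew, left i h, neg_zero]), neg_zero]

theorem lie_eq_zero_of_mem_pIterSpan (hpm : IsPMap p F L pm) {x a b : L}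
    (ha : a ∈ pIterSpan F pm x) (hb : b ∈ pIterSpan F pm x) : ⁅a, b⁆ = 0 := by
  refine lie_eq_zero_of_mem_span ?_ ha hb
  rintro _ ⟨i, rfl⟩ _ ⟨j, rfl⟩
  exact hpm.lie_iterate_eq_zero (lie_self x) i j

variable [CharP F p]

theorem map_add_of_lie_eq_zero (hpm : IsPMap p F L pm) {a b : L} (h : ⁅a, b⁆ = 0) :
    pm (a + b) = pm a + pm b := by
  obtain ⟨s, hs, hadd⟩ := hpm.add_pow a b
  have hp : 2 ≤ p := (Fact.out : p.Prime).two_le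
  have hlie : ⁅(Polynomial.X : F[X]) ⊗ₜ[F] a + (1 : F[X]) ⊗ₜ[F] b, (1 : F[X]) ⊗ₜ[F] a⁆ = 0 := by
    rw [add_lie (M := F[X] ⊗[F] L), LieAlgebra.ExtendScalars.bracket_tmul,
      LieAlgebra.ExtendScalars.bracket_tmul, lie_self, ← lie_skew, h]
    simp
  -- The left side of Jacobson's formula vanishes, and its coefficients `j + 1 < p` are units.
  rw [adIter_eq_zero_of_lie_eq_zero hlie (by omega)] at hs
  have hsum : ∀ j : Fin (p - 1), ((j : ℕ) + 1) • s j = 0 :=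
    eq_zero_of_sum_X_pow_tmul_eq_zero (R := F) _ (by simpa [TensorProduct.tmul_smul] using hs.symm)
  have hs0 : ∀ j : Fin (p - 1), s j = 0 := fun j => by
    have hj : ((j : ℕ) : F) + 1 ≠ 0 := by
      rw [← Nat.cast_succ, Ne, CharP.cast_eq_zero_iff F p]
      exact Nat.not_dvd_of_pos_of_lt j.val.succ_pos (by omega)
    simpa [← Nat.cast_smul_eq_nsmul F, hj] using hsum j
  simp [hadd, hs0]

theorem apply_mem_span_image (hpm : IsPMap p F L pm) {S : Set L}
    (hS : ∀ a ∈ S, ∀ b ∈ S, ⁅a, b⁆ = 0) {a : L} (ha : a ∈ span F S) :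
    pm a ∈ span F (pm '' S) := by
  induction ha using Submodule.span_induction with
  | mem u hu => exact subset_span (mem_image_of_mem pm hu)
  | zero => rw [hpm.map_zero]; exact zero_mem _
  | add u v hu hv h₁ h₂ =>
    rw [hpm.map_add_of_lie_eq_zero (lie_eq_zero_of_mem_span hS hu hv)]; exact add_mem h₁ h₂
  | smul c u _ h => rw [hpm.smul_pow]; exact smul_mem _ _ h

theorem span_image_pIterSpan (hpm : IsPMap p F L pm) (x : L) :
    span F (pm '' pIterSpan F pm x) = pIterSpan F pm (pm x) := by
  have hgen : pm '' range (fun i : ℕ => pm^[i] x) = range fun i : ℕ => pm^[i] (pm x) := by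
    rw [← range_comp]
    exact congrArg range (funext fun i => (Function.iterate_succ_apply' pm i x).symm)
  refine le_antisymm (span_le.2 ?_) (span_le.2 ?_)
  · rintro _ ⟨a, ha, rfl⟩
    rw [pIterSpan, ← hgen]
    exact hpm.apply_mem_span_image (fun a ha b hb =>
      hpm.lie_eq_zero_of_mem_pIterSpan (subset_span ha) (subset_span hb)) ha
  · rw [← hgen]
    exact image_mono subset_span |>.trans subset_span

theorem apply_mem_pIterSpan (hpm : IsPMap p F L pm) {x a : L} (ha : a ∈ pIterSpan F pm x) :
    pm a ∈ pIterSpan F pm x :=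
  pIterSpan_apply_le x <| hpm.span_image_pIterSpan x ▸ subset_span (mem_image_of_mem pm ha)

theorem toSubmodule_pSpan_singleton (hpm : IsPMap p F L pm) (x : L) :
    (pSpan F pm {x}).toSubmodule = pIterSpan F pm x := by
  let A : LieSubalgebra F L :=
    { pIterSpan F pm x with
      lie_mem' := fun ha hb => by
        rw [hpm.lie_eq_zero_of_mem_pIterSpan ha hb]; exact zero_mem (pIterSpan F pm x) }
  refine le_antisymm (fun a ha => pSpan_le (H := A) (fun a ha => hpm.apply_mem_pIterSpan ha)
    (singleton_subset_iff.2 (iterate_mem_pIterSpan x 0)) ha) (span_le.2 (range_subset_iff.2 ?_))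
  intro i
  induction i with
  | zero => exact subset_pSpan rfl
  | succ i ih => rw [Function.iterate_succ_apply']; exact isPSubalgebra_pSpan _ ih

theorem mem_pSpan_singleton_iff (hpm : IsPMap p F L pm) {x y : L} :
    y ∈ pSpan F pm {x} ↔ y ∈ pIterSpan F pm x := by
  rw [← LieSubalgebra.mem_toSubmodule, hpm.toSubmodule_pSpan_singleton]

theorem isSemisimpleElt_iff (hpm : IsPMap p F L pm) {x : L} :
    IsSemisimpleElt F pm x ↔ x ∈ pIterSpan F pm (pm x) :=
  hpm.mem_pSpan_singleton_iff

theorem pIterSpan_eq_span_image_Iio (hpm : IsPMap p F L pm) {x : L} {m : ℕ}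
    (hm : pm^[m] x ∈ span F ((fun i => pm^[i] x) '' Iio m)) :
    pIterSpan F pm x = span F ((fun i => pm^[i] x) '' Iio m) := by
  set W := span F ((fun i => pm^[i] x) '' Iio m)
  have hW : ∀ a ∈ W, pm a ∈ W := fun a ha => by
    refine span_le.2 ?_ (hpm.apply_mem_span_image ?_ ha)
    · rintro _ ⟨_, ⟨i, hi, rfl⟩, rfl⟩
      rw [← Function.iterate_succ_apply' pm i x]
      rcases (Nat.succ_le_of_lt hi).lt_or_eq with hlt | heq
      exacts [subset_span (mem_image_of_mem _ hlt), heq ▸ hm]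
    · rintro _ ⟨i, -, rfl⟩ _ ⟨j, -, rfl⟩
      exact hpm.lie_iterate_eq_zero (lie_self x) i j
  refine le_antisymm (span_le.2 (range_subset_iff.2 fun k => ?_))
    (span_mono (image_subset_range _ _))
  induction k with
  | zero =>
    rcases m.eq_zero_or_pos with rfl | hm0
    exacts [hm, subset_span (mem_image_of_mem _ hm0)]
  | succ k ih => rw [Function.iterate_succ_apply']; exact hW _ ih

theorem finiteDimensional_pIterSpan (hpm : IsPMap p F L pm) {x : L}
    (hx : x ∈ pIterSpan F pm (pm x)) : FiniteDimensional F (pIterSpan F pm x) := by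
  obtain ⟨m, hm⟩ := exists_mem_span_image_Iio (fun i => pm^[i] x) hx
  rw [hpm.pIterSpan_eq_span_image_Iio hm]
  exact FiniteDimensional.span_of_finite F ((finite_Iio m).image _)

def restrictPIterSpan (hpm : IsPMap p F L pm) (x : L) :
    pIterSpan F pm x →ₛₗ[frobenius F p] pIterSpan F pm x where
  toFun a := ⟨pm a, hpm.apply_mem_pIterSpan a.2⟩
  map_add' a b := Subtype.ext <| hpm.map_add_of_lie_eq_zero <|
    hpm.lie_eq_zero_of_mem_pIterSpan a.2 b.2
  map_smul' c a := Subtype.ext <| hpm.smul_pow c a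

theorem span_range_restrictPIterSpan (hpm : IsPMap p F L pm) {x : L}
    (hx : x ∈ pIterSpan F pm (pm x)) : span F (range (hpm.restrictPIterSpan x)) = ⊤ := by
  apply map_injective_of_injective (pIterSpan F pm x).injective_subtype
  have himage : (pIterSpan F pm x).subtype '' range (hpm.restrictPIterSpan x) =
      pm '' pIterSpan F pm x := by
    rw [← range_comp]
    ext; simp [restrictPIterSpan]
  rw [map_span, Submodule.map_top, range_subtype, himage, hpm.span_image_pIterSpan,
    pIterSpan_apply_eq_of_mem hx]

theorem mem_pIterSpan_apply_of_mem (hpm : IsPMap p F L pm) {x y : L}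
    (hx : x ∈ pIterSpan F pm (pm x)) [FiniteDimensional F (pIterSpan F pm x)]
    (hy : y ∈ pIterSpan F pm x) : y ∈ pIterSpan F pm (pm y) := by
  set A := pIterSpan F pm x
  set B := (pIterSpan F pm y).comap A.subtype
  have hB := span_image_eq_of_span_range_eq_top _ (hpm.span_range_restrictPIterSpan hx) (B := B)
    fun a ha => hpm.apply_mem_pIterSpan (x := y) ha
  have hyB : (⟨y, hy⟩ : A) ∈ span F (hpm.restrictPIterSpan x '' B) := by
    rw [hB]; exact iterate_mem_pIterSpan (pm := pm) y 0
  have hyL := mem_map_of_mem (f := A.subtype) hyB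
  rw [map_span, image_image] at hyL
  rw [← hpm.span_image_pIterSpan]
  refine span_mono ?_ hyL
  rintro _ ⟨a, ha, rfl⟩
  exact mem_image_of_mem pm ha

end IsPMap

/-- If `x` is a semisimple element of a restricted Lie algebra, then every
element of the `p`-subalgebra generated by `x` is semisimple. -/
theorem isSemisimpleElt_of_mem_pSpan (p : ℕ) [Fact p.Prime]
    (F : Type*) [Field F] [CharP F p]
    {L : Type*} [LieRing L] [LieAlgebra F L]
    (pm : L → L) (hpm : IsPMap p F L pm)
    {x : L} (hx : IsSemisimpleElt F pm x) :
    ∀ y ∈ pSpan F pm {x}, IsSemisimpleElt F pm y := by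
  intro y hy
  rw [hpm.mem_pSpan_singleton_iff] at hy
  rw [hpm.isSemisimpleElt_iff] at hx ⊢
  have := hpm.finiteDimensional_pIterSpan hx
  exact hpm.mem_pIterSpan_apply_of_mem hx hy
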